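/- arXiv:1901.04825 — 5 statements merged into one kernel-verified Lean document; each statement's English description precedes it below -/
import Mathlib

section
/- For Re(c) > Re(b) > 0 and 0 ≤ y < 1, the incomplete Pochhammer ratio admits the representation [b,c;y]_n = (1/B(b,c-b)) · (y^{b+n}/(b+n)) (1-y)^{c-b} · ₂F₁(1, c+n; b+n+1; y). -/
open Complex

/-- Incomplete beta function `B_y(x,z) = ∫_0^y t^(x-1) (1-t)^(z-1) dt`. -/
noncomputable def incBeta (y : ℝ) (x z : ℂ) : ℂ :=
  ∫ t in (0:ℝ)..y, (t:ℂ)^(x-1) * (1 - (t:ℂ))^(z-1)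

/-- Pochhammer symbol `(a)_n`. -/
noncomputable def poch (a : ℂ) (n : ℕ) : ℂ := ∏ i ∈ Finset.range n, (a + i)

/-- Incomplete Pochhammer ratio `[b,c;y]_n`. -/
noncomputable def ipochL (b c : ℂ) (y : ℝ) (n : ℕ) : ℂ :=
  incBeta y (b + n) (c - b) / Complex.betaIntegral b (c - b)

/-- Incomplete Pochhammer ratio `{b,c;y}_n`. -/
noncomputable def ipochU (b c : ℂ) (y : ℝ) (n : ℕ) : ℂ :=
  incBeta (1 - y) (c - b) (b + n) / Complex.betaIntegral b (c - b)

/-- Gauss hypergeometric series `₂F₁(a,b;c;x)`. -/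
noncomputable def hyp2F1 (a b c x : ℂ) : ℂ :=
  ∑' n : ℕ, poch a n * poch b n / poch c n * x^n / (n.factorial : ℂ)

/-- Incomplete Gauss hypergeometric function `₂F₁(a,[b,c;y];x)`. -/
noncomputable def inc2F1L (a b c : ℂ) (y : ℝ) (x : ℂ) : ℂ :=
  ∑' n : ℕ, poch a n * ipochL b c y n * x^n / (n.factorial : ℂ)

/-- Incomplete Gauss hypergeometric function `₂F₁(a,{b,c;y};x)`. -/
noncomputable def inc2F1U (a b c : ℂ) (y : ℝ) (x : ℂ) : ℂ :=
  ∑' n : ℕ, poch a n * ipochU b c y n * x^n / (n.factorial : ℂ)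

/-- Incomplete confluent hypergeometric function `₁F₁([a,b;y];x)`. -/
noncomputable def inc1F1L (a b : ℂ) (y : ℝ) (x : ℂ) : ℂ :=
  ∑' n : ℕ, ipochL a b y n * x^n / (n.factorial : ℂ)

/-- Incomplete confluent hypergeometric function `₁F₁({a,b;y};x)`. -/
noncomputable def inc1F1U (a b : ℂ) (y : ℝ) (x : ℂ) : ℂ :=
  ∑' n : ℕ, ipochU a b y n * x^n / (n.factorial : ℂ)

/-- Incomplete Appell function `F₁[a,b,c;d;x,z;y]`. -/
noncomputable def incAppellF1 (a b c d x z : ℂ) (y : ℝ) : ℂ :=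
  ∑' p : ℕ × ℕ, ipochL a d y (p.1 + p.2) * poch b p.1 * poch c p.2 *
    x^p.1 * z^p.2 / ((p.1.factorial : ℂ) * (p.2.factorial : ℂ))

/-- Incomplete Riemann–Liouville fractional derivative `D_z^μ[f(z);y]`. -/
noncomputable def incRL (μ : ℂ) (f : ℂ → ℂ) (y : ℝ) (z : ℂ) : ℂ :=
  z^(-μ) / Complex.Gamma (-μ) * ∫ u in (0:ℝ)..y, f ((u:ℂ) * z) * (1 - (u:ℂ))^(-μ-1)

/-!
Integration by parts gives `p B_y(p,q) = y^p (1-y)^q + (p+q) B_y(p+1,q)`. Iterating it `N` times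
writes `B_y(p,q)` as the `N`-th partial sum of `y^p (1-y)^q / p · ₂F₁(1, p+q; p+1; y)` plus the
remainder `(p+q)_N / (p)_N · B_y(p+N,q)`. Since `|B_y(p+N,q)| ≤ y^N ∫_0^y |t^(p-1) (1-t)^(q-1)|`,
the remainder is dominated by the terms of a convergent ratio-test series and tends to `0`.
-/

open Filter Topology MeasureTheory Set

lemma poch_succ_right (a : ℂ) (n : ℕ) : poch a (n + 1) = poch a n * (a + n) :=
  Finset.prod_range_succ _ n

lemma poch_succ_left (a : ℂ) (n : ℕ) : poch a (n + 1) = a * poch (a + 1) n := by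
  rw [poch, Finset.prod_range_succ', poch]
  push_cast
  rw [mul_comm, add_zero]
  exact congrArg _ (Finset.prod_congr rfl fun i _ => by ring)

lemma poch_one_eq_factorial (n : ℕ) : poch 1 n = n.factorial := by
  induction n with
  | zero => simp [poch]
  | succ n ih => rw [poch_succ_right, ih, Nat.factorial_succ]; push_cast; ring

lemma poch_ne_zero {a : ℂ} (ha : ∀ k : ℕ, a + k ≠ 0) (n : ℕ) : poch a n ≠ 0 :=
  Finset.prod_ne_zero_iff.mpr fun k _ => ha k

lemma add_natCast_ne_zero_of_re_pos {a : ℂ} (ha : 0 < a.re) (k : ℕ) : a + k ≠ 0 := by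
  intro h
  have := congrArg re h
  simp only [add_re, natCast_re, zero_re] at this
  linarith [k.cast_nonneg (α := ℝ)]

lemma tendsto_add_natCast_div_add_natCast (a b : ℂ) :
    Tendsto (fun N : ℕ => (a + N) / (b + N)) atTop (𝓝 1) := by
  have hinv : Tendsto (fun N : ℕ => (b + N)⁻¹) atTop (𝓝 0) :=
    tendsto_inv₀_cobounded.comp
      ((tendsto_const_add_cobounded b).comp tendsto_natCast_atTop_cobounded)
  have hlim := (hinv.const_mul (a - b)).const_add 1
  rw [mul_zero, add_zero] at hlim
  refine hlim.congr' ?_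
  filter_upwards [(tendsto_const_add_cobounded b).comp tendsto_natCast_atTop_cobounded
    |>.eventually_ne_cobounded 0] with N (hN : b + N ≠ 0)
  field_simp
  ring

lemma summable_poch_div_poch_mul_pow (a : ℂ) {b : ℂ} (hb : ∀ k : ℕ, b + k ≠ 0) {z : ℂ}
    (hz : ‖z‖ < 1) : Summable fun N => poch a N / poch b N * z ^ N := by
  obtain ⟨r, hzr, hr1⟩ := exists_between hz
  have hratio : ∀ᶠ N : ℕ in atTop, ‖(a + N) / (b + N) * z‖ ≤ r := by
    have := ((tendsto_add_natCast_div_add_natCast a b).mul_const z).norm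
    rw [one_mul] at this
    exact this.eventually (eventually_le_nhds hzr)
  refine summable_of_ratio_norm_eventually_le hr1 ?_
  filter_upwards [hratio] with N hN
  have hstep : poch a (N + 1) / poch b (N + 1) * z ^ (N + 1) =
      (a + N) / (b + N) * z * (poch a N / poch b N * z ^ N) := by
    have hpoch : poch b N ≠ 0 := poch_ne_zero hb N
    have hbN : b + N ≠ 0 := hb N
    rw [poch_succ_right, poch_succ_right, pow_succ]
    field_simp
  rw [hstep, norm_mul]
  exact mul_le_mul_of_nonneg_right hN (norm_nonneg _)

lemma hasSum_of_sum_range_eq_sub {E : Type*} [NormedAddCommGroup E] [CompleteSpace E]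
    {g r : ℕ → E} {w : ℕ → ℝ} {S : E} (hsum : ∀ N, ∑ k ∈ Finset.range N, g k = S - r N)
    (hr : ∀ N, ‖r N‖ ≤ w N) (hw : Summable w) : HasSum g S := by
  have hg : ∀ N, g N = r N - r (N + 1) := fun N => by
    have := hsum (N + 1)
    rw [Finset.sum_range_succ, hsum N] at this
    rw [← sub_sub_sub_cancel_left (r (N + 1)) (r N) S, ← this, add_sub_cancel_left]
  have hsummable : Summable g := by
    refine .of_norm_bounded (hw.add ((summable_nat_add_iff 1).mpr hw)) fun N => ?_
    rw [hg]
    exact (norm_sub_le _ _).trans (add_le_add (hr N) (hr (N + 1)))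
  have hr0 : Tendsto r atTop (𝓝 0) := squeeze_zero_norm hr hw.tendsto_atTop_zero
  rw [hsummable.hasSum_iff_tendsto_nat]
  simpa only [hsum, sub_zero] using tendsto_const_nhds.sub hr0

lemma one_sub_ofReal_mem_slitPlane {t : ℝ} (ht : t < 1) : 1 - (t : ℂ) ∈ slitPlane := by
  rw [← ofReal_one, ← ofReal_sub]
  exact ofReal_mem_slitPlane.mpr (sub_pos.mpr ht)

lemma continuousOn_one_sub_ofReal_cpow (q : ℂ) {y : ℝ} (hy : y < 1) :
    ContinuousOn (fun t : ℝ => (1 - (t : ℂ)) ^ q) (uIcc 0 y) := by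
  refine (continuous_const.sub continuous_ofReal).continuousOn.cpow_const fun t ht => ?_
  exact one_sub_ofReal_mem_slitPlane (ht.2.trans_lt (max_lt zero_lt_one hy))

lemma intervalIntegrable_incBeta_integrand {p : ℂ} (hp : 0 < p.re) (q : ℂ) {y : ℝ} (hy : y < 1) :
    IntervalIntegrable (fun t : ℝ => (t : ℂ) ^ (p - 1) * (1 - (t : ℂ)) ^ (q - 1)) volume 0 y :=
  (intervalIntegral.intervalIntegrable_cpow' (by simpa using hp)).mul_continuousOn
    (continuousOn_one_sub_ofReal_cpow (q - 1) hy)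

lemma incBeta_eq_add {p : ℂ} (hp : 0 < p.re) (q : ℂ) {y : ℝ} (hy0 : 0 ≤ y) (hy1 : y < 1) :
    incBeta y p q = incBeta y (p + 1) q + incBeta y p (q + 1) := by
  have hp1 : 0 < (p + 1).re := by rw [add_re, one_re]; positivity
  rw [incBeta, incBeta, incBeta, ← intervalIntegral.integral_add
    (intervalIntegrable_incBeta_integrand hp1 q hy1)
    (intervalIntegrable_incBeta_integrand hp (q + 1) hy1)]
  refine intervalIntegral.integral_congr_ae (ae_of_all _ fun t ht => ?_)
  rw [uIoc_of_le hy0] at ht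
  have ht0 : (t : ℂ) ≠ 0 := ofReal_ne_zero.mpr ht.1.ne'
  have ht1 : 1 - (t : ℂ) ≠ 0 := slitPlane_ne_zero (one_sub_ofReal_mem_slitPlane (ht.2.trans_lt hy1))
  rw [add_sub_cancel_right, add_sub_cancel_right, ← sub_add_cancel p 1, cpow_add _ _ ht0,
    ← sub_add_cancel q 1, cpow_add _ _ ht1, sub_add_cancel, sub_add_cancel, cpow_one, cpow_one]
  ring

lemma hasDerivAt_ofReal_cpow_mul_one_sub_cpow (p q : ℂ) {x : ℝ} (hx0 : 0 < x) (hx1 : x < 1) :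
    HasDerivAt (fun t : ℝ => (t : ℂ) ^ p * (1 - (t : ℂ)) ^ q)
      (p * ((x : ℂ) ^ (p - 1) * (1 - (x : ℂ)) ^ q) -
        q * ((x : ℂ) ^ p * (1 - (x : ℂ)) ^ (q - 1))) x := by
  have hx : (x : ℂ) ∈ slitPlane := ofReal_mem_slitPlane.mpr hx0
  have hpow := (hasDerivAt_id (x : ℂ)).cpow_const (c := p) hx
  have hpow_one_sub := ((hasDerivAt_id (x : ℂ)).const_sub 1).cpow_const (c := q)
    (one_sub_ofReal_mem_slitPlane hx1)
  refine ((hpow.mul hpow_one_sub).comp_ofReal).congr_deriv ?_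
  simp only [id]
  ring

lemma mul_incBeta_add_one_right {p : ℂ} (hp : 0 < p.re) (q : ℂ) {y : ℝ} (hy0 : 0 ≤ y)
    (hy1 : y < 1) :
    p * incBeta y p (q + 1) = (y : ℂ) ^ p * (1 - (y : ℂ)) ^ q + q * incBeta y (p + 1) q := by
  have hp1 : 0 < (p + 1).re := by rw [add_re, one_re]; positivity
  have hcont : ContinuousOn (fun t : ℝ => (t : ℂ) ^ p * (1 - (t : ℂ)) ^ q) (Icc 0 y) := by
    refine ContinuousOn.mul (fun t ht => ?_) ?_
    · exact ((continuousAt_cpow_const_of_re_pos (Or.inl (by simpa using ht.1)) hp).comp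
        continuous_ofReal.continuousAt).continuousWithinAt
    · simpa only [uIcc_of_le hy0] using continuousOn_one_sub_ofReal_cpow q hy1
  have hI₁ : IntervalIntegrable (fun t : ℝ => (t : ℂ) ^ (p - 1) * (1 - (t : ℂ)) ^ q)
      volume 0 y := by
    simpa only [add_sub_cancel_right] using intervalIntegrable_incBeta_integrand hp (q + 1) hy1
  have hI₂ : IntervalIntegrable (fun t : ℝ => (t : ℂ) ^ p * (1 - (t : ℂ)) ^ (q - 1))
      volume 0 y := by
    simpa only [add_sub_cancel_right] using intervalIntegrable_incBeta_integrand hp1 q hy1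
  have hftc := intervalIntegral.integral_eq_sub_of_hasDerivAt_of_le hy0 hcont
    (fun x hx => hasDerivAt_ofReal_cpow_mul_one_sub_cpow p q hx.1 (hx.2.trans hy1))
    ((hI₁.const_mul p).sub (hI₂.const_mul q))
  rw [intervalIntegral.integral_sub (hI₁.const_mul p) (hI₂.const_mul q),
    intervalIntegral.integral_const_mul, intervalIntegral.integral_const_mul, ofReal_zero,
    zero_cpow (fun h => by simp [h] at hp), zero_mul, sub_zero] at hftc
  simp only [incBeta, add_sub_cancel_right]
  linear_combination hftc

lemma mul_incBeta {p : ℂ} (hp : 0 < p.re) (q : ℂ) {y : ℝ} (hy0 : 0 ≤ y) (hy1 : y < 1) :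
    p * incBeta y p q = (y : ℂ) ^ p * (1 - (y : ℂ)) ^ q + (p + q) * incBeta y (p + 1) q := by
  linear_combination p * incBeta_eq_add hp q hy0 hy1 + mul_incBeta_add_one_right hp q hy0 hy1

lemma incBeta_eq_sum_range_add {p : ℂ} (hp : 0 < p.re) (q : ℂ) {y : ℝ} (hy0 : 0 ≤ y)
    (hy1 : y < 1) (N : ℕ) :
    incBeta y p q = ∑ k ∈ Finset.range N,
        poch (p + q) k / poch p (k + 1) * (y : ℂ) ^ (p + k) * (1 - (y : ℂ)) ^ q +
      poch (p + q) N / poch p N * incBeta y (p + N) q := by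
  induction N with
  | zero => simp [poch]
  | succ N ih =>
    have hpN : 0 < (p + N).re := by rw [add_re, natCast_re]; positivity
    have hrec := mul_incBeta hpN q hy0 hy1
    have hpoch : poch p N ≠ 0 := poch_ne_zero (add_natCast_ne_zero_of_re_pos hp) N
    have hpN0 : p + N ≠ 0 := add_natCast_ne_zero_of_re_pos hp N
    rw [Finset.sum_range_succ, ih, add_assoc]
    congr 1
    rw [poch_succ_right, poch_succ_right, Nat.cast_succ, ← add_assoc]
    field_simp
    linear_combination poch (p + q) N * hrec

lemma norm_incBeta_add_natCast_le {p : ℂ} (hp : 0 < p.re) (q : ℂ) {y : ℝ} (hy0 : 0 ≤ y)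
    (hy1 : y < 1) (N : ℕ) :
    ‖incBeta y (p + N) q‖ ≤
      y ^ N * ∫ t in (0 : ℝ)..y, ‖(t : ℂ) ^ (p - 1) * (1 - (t : ℂ)) ^ (q - 1)‖ := by
  rw [← intervalIntegral.integral_const_mul]
  refine intervalIntegral.norm_integral_le_of_norm_le hy0 (ae_of_all _ fun t ht => ?_)
    ((intervalIntegrable_incBeta_integrand hp q hy1).norm.const_mul _)
  have ht0 : (t : ℂ) ≠ 0 := ofReal_ne_zero.mpr ht.1.ne'
  rw [add_sub_right_comm, cpow_add _ _ ht0, cpow_natCast, mul_right_comm, norm_mul, norm_pow,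
    norm_real, Real.norm_of_nonneg ht.1.le, mul_comm]
  gcongr
  exacts [ht.1.le, ht.2]

lemma hasSum_incBeta {p : ℂ} (hp : 0 < p.re) (q : ℂ) {y : ℝ} (hy0 : 0 ≤ y) (hy1 : y < 1) :
    HasSum (fun k : ℕ => poch (p + q) k / poch p (k + 1) * (y : ℂ) ^ (p + k) * (1 - (y : ℂ)) ^ q)
      (incBeta y p q) := by
  set J := ∫ t in (0 : ℝ)..y, ‖(t : ℂ) ^ (p - 1) * (1 - (t : ℂ)) ^ (q - 1)‖
  have hsummable := summable_poch_div_poch_mul_pow (p + q) (add_natCast_ne_zero_of_re_pos hp)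
    (z := y) (by rwa [norm_real, Real.norm_of_nonneg hy0])
  refine hasSum_of_sum_range_eq_sub
    (fun N => eq_sub_of_add_eq (incBeta_eq_sum_range_add hp q hy0 hy1 N).symm)
    (fun N => ?_) (hsummable.norm.mul_right J)
  rw [norm_mul, norm_mul, mul_assoc, norm_pow, norm_real, Real.norm_of_nonneg hy0]
  exact mul_le_mul_of_nonneg_left (norm_incBeta_add_natCast_le hp q hy0 hy1 N) (norm_nonneg _)

lemma incBeta_eq_hyp2F1 {p : ℂ} (hp : 0 < p.re) (q : ℂ) {y : ℝ} (hy0 : 0 < y) (hy1 : y < 1) :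
    incBeta y p q = (y : ℂ) ^ p / p * (1 - (y : ℂ)) ^ q * hyp2F1 1 (p + q) (p + 1) y := by
  rw [← (hasSum_incBeta hp q hy0.le hy1).tsum_eq, hyp2F1, ← tsum_mul_left]
  refine tsum_congr fun k => ?_
  have hp1 : 0 < (p + 1).re := by rw [add_re, one_re]; positivity
  have hpoch : poch (p + 1) k ≠ 0 := poch_ne_zero (add_natCast_ne_zero_of_re_pos hp1) k
  have hp0 : p ≠ 0 := fun h => by simp [h] at hp
  have hfact : (k.factorial : ℂ) ≠ 0 := Nat.cast_ne_zero.mpr k.factorial_ne_zero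
  rw [poch_one_eq_factorial, poch_succ_left, cpow_add _ _ (ofReal_ne_zero.mpr hy0.ne'),
    cpow_natCast]
  field_simp

theorem stmt3_general (b c : ℂ) (n : ℕ) (y : ℝ) (hb : 0 < b.re)
    (hy0 : 0 ≤ y) (hy1 : y < 1) :
    ipochL b c y n = (1 / Complex.betaIntegral b (c - b)) *
      ((y:ℂ)^(b + n) / (b + n)) * (1 - (y:ℂ))^(c - b) *
      hyp2F1 1 (c + n) (b + n + 1) (y:ℂ) := by
  have hbn : 0 < (b + n).re := by rw [add_re, natCast_re]; positivity
  rw [ipochL]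
  rcases hy0.eq_or_lt with rfl | hy0
  · simp [incBeta, zero_cpow (add_natCast_ne_zero_of_re_pos hb n)]
  · rw [incBeta_eq_hyp2F1 hbn (c - b) hy0 hy1, show b + n + (c - b) = c + n by ring]
    ring

theorem stmt3 (b c : ℂ) (n : ℕ) (y : ℝ) (hb : 0 < b.re) (hbc : b.re < c.re)
    (hy0 : 0 ≤ y) (hy1 : y < 1) :
    ipochL b c y n = (1 / Complex.betaIntegral b (c - b)) *
      ((y:ℂ)^(b + n) / (b + n)) * (1 - (y:ℂ))^(c - b) *
      hyp2F1 1 (c + n) (b + n + 1) (y:ℂ) :=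
  stmt3_general b c n y hb hy0 hy1
end

section
/- For 0 < y < 1, Re(c) > Re(b) > 0 and positive integer n, the incomplete Pochhammer ratio satisfies [b,c;y]_n = ((-1)^n Γ(c) / (Γ(c-b+n)Γ(b))) · y^{b+n} · (d^n/dy^n)[ y^{-b} B_y(b, c-b+n) ]. -/
open Complex

/-!
Integration by parts, `s^u (1-s)^v = u B_s(u, v+1) - v B_s(u+1, v)`, shows that
`d/ds [s^(-u) B_s(u, v+1)] = -v s^(-(u+1)) B_s(u+1, v)`. Iterating `n` times from
`s^(-b) B_s(b, c-b+n)` gives `(-1)^n (c-b)_n s^(-(b+n)) B_s(b+n, c-b)`, and the identity follows from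
`(c-b)_n = Γ(c-b+n) / Γ(c-b)` and `B(b, c-b) = Γ(b) Γ(c-b) / Γ(c)`.
-/

open Set MeasureTheory intervalIntegral

section IncompleteBeta

variable {u v : ℂ} {s : ℝ}

lemma hasDerivAt_one_sub_ofReal_cpow (hs : s < 1) :
    HasDerivAt (fun r : ℝ => (1 - (r : ℂ)) ^ v) (-v * (1 - (s : ℂ)) ^ (v - 1)) s := by
  have hslit : 1 - (s : ℂ) ∈ slitPlane := Or.inl (by simpa using hs)
  have := ((hasDerivAt_id (s : ℂ)).const_sub 1).cpow_const (c := v) hslit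
  simp only [id_eq] at this
  convert this.comp_ofReal using 1
  ring

lemma intervalIntegrable_incBeta_integrand_s4 (hu : 0 < u.re) (hs : s < 1) :
    IntervalIntegrable (fun t : ℝ => (t : ℂ) ^ (u - 1) * (1 - (t : ℂ)) ^ (v - 1)) volume 0 s := by
  refine (intervalIntegrable_cpow' (by simpa using hu)).mul_continuousOn fun t ht => ?_
  have ht1 : t < 1 := by
    rw [uIcc, mem_Icc] at ht
    exact ht.2.trans_lt (max_lt zero_lt_one hs)
  exact (hasDerivAt_one_sub_ofReal_cpow ht1).continuousAt.continuousWithinAt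

lemma hasDerivAt_incBeta (hu : 0 < u.re) (hs : s ∈ Ioo 0 1) :
    HasDerivAt (fun r : ℝ => incBeta r u v) ((s : ℂ) ^ (u - 1) * (1 - (s : ℂ)) ^ (v - 1)) s := by
  have hcont : ∀ t ∈ Ioo (0 : ℝ) 1,
      ContinuousAt (fun t : ℝ => (t : ℂ) ^ (u - 1) * (1 - (t : ℂ)) ^ (v - 1)) t := fun t ht =>
    (continuousAt_ofReal_cpow_const t _ (Or.inr ht.1.ne')).mul
      (hasDerivAt_one_sub_ofReal_cpow ht.2).continuousAt
  exact integral_hasDerivAt_right (intervalIntegrable_incBeta_integrand_s4 hu hs.2)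
    (ContinuousAt.stronglyMeasurableAtFilter isOpen_Ioo hcont s hs) (hcont s hs)

lemma ofReal_cpow_mul_one_sub_cpow_eq_incBeta (hu : 0 < u.re) (hs0 : 0 ≤ s) (hs1 : s < 1) :
    (s : ℂ) ^ u * (1 - (s : ℂ)) ^ v = u * incBeta s u (v + 1) - v * incBeta s (u + 1) v := by
  have hu0 : u ≠ 0 := fun h => by simp [h] at hu
  have hF : ∀ x ∈ Ioo 0 s, HasDerivAt (fun x : ℝ => (x : ℂ) ^ u * (1 - (x : ℂ)) ^ v)
      (u * ((x : ℂ) ^ (u - 1) * (1 - (x : ℂ)) ^ (v + 1 - 1)) -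
        v * ((x : ℂ) ^ (u + 1 - 1) * (1 - (x : ℂ)) ^ (v - 1))) x := fun x hx => by
    refine ((hasDerivAt_ofReal_cpow_const hx.1.ne' hu0).fun_mul
      (hasDerivAt_one_sub_ofReal_cpow (v := v) (hx.2.trans hs1))).congr_deriv ?_
    simp only [add_sub_cancel_right]
    ring
  have hFcont : ContinuousOn (fun x : ℝ => (x : ℂ) ^ u * (1 - (x : ℂ)) ^ v) (Icc 0 s) := fun x hx =>
    ((continuous_ofReal_cpow_const hu).continuousAt.mul
      (hasDerivAt_one_sub_ofReal_cpow (hx.2.trans_lt hs1)).continuousAt).continuousWithinAt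
  have h₁ := (intervalIntegrable_incBeta_integrand_s4 (v := v + 1) hu hs1).const_mul u
  have h₂ := (intervalIntegrable_incBeta_integrand_s4 (v := v) (u := u + 1)
    (by rw [add_re, one_re]; positivity) hs1).const_mul v
  have hFTC := integral_eq_sub_of_hasDerivAt_of_le hs0 hFcont hF (h₁.sub h₂)
  rw [integral_sub h₁ h₂, intervalIntegral.integral_const_mul,
    intervalIntegral.integral_const_mul] at hFTC
  simp only [ofReal_zero, zero_cpow hu0, zero_mul, sub_zero] at hFTC
  exact hFTC.symm

lemma hasDerivAt_ofReal_cpow_neg_mul_incBeta (hu : 0 < u.re) (hs : s ∈ Ioo 0 1) :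
    HasDerivAt (fun r : ℝ => (r : ℂ) ^ (-u) * incBeta r u (v + 1))
      (-v * ((s : ℂ) ^ (-(u + 1)) * incBeta s (u + 1) v)) s := by
  have hs0 : (s : ℂ) ≠ 0 := ofReal_ne_zero.mpr hs.1.ne'
  have hneg : -u ≠ 0 := neg_ne_zero.mpr fun h => by simp [h] at hu
  have hIBP := ofReal_cpow_mul_one_sub_cpow_eq_incBeta (v := v) hu hs.1.le hs.2
  have hpow₁ : (s : ℂ) ^ (-u - 1) = (s : ℂ) ^ (-(u + 1)) := by rw [neg_add']
  have hpow₂ : (s : ℂ) ^ (-u) * (s : ℂ) ^ (u - 1) = (s : ℂ) ^ (-(u + 1)) * (s : ℂ) ^ u := by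
    rw [← cpow_add _ _ hs0, ← cpow_add _ _ hs0]
    congr 1
    ring
  refine ((hasDerivAt_ofReal_cpow_const hs.1.ne' hneg).fun_mul
    (hasDerivAt_incBeta hu hs)).congr_deriv ?_
  rw [add_sub_cancel_right, hpow₁, ← mul_assoc, hpow₂]
  linear_combination (s : ℂ) ^ (-(u + 1)) * hIBP

lemma iteratedDeriv_ofReal_cpow_neg_mul_incBeta (hu : 0 < u.re) (w : ℂ) (k : ℕ) :
    EqOn (iteratedDeriv k fun r : ℝ => (r : ℂ) ^ (-u) * incBeta r u w)
      (fun r => (-1) ^ k * (descPochhammer ℂ k).eval (w - 1) *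
        ((r : ℂ) ^ (-(u + k)) * incBeta r (u + k) (w - k))) (Ioo 0 1) := by
  induction k with
  | zero => intro s _; simp
  | succ k ih =>
    intro s hs
    have huk : 0 < (u + k).re := by rw [add_re, natCast_re]; positivity
    have hD := (hasDerivAt_ofReal_cpow_neg_mul_incBeta (v := w - k - 1) huk hs).const_mul
      ((-1) ^ k * (descPochhammer ℂ k).eval (w - 1))
    rw [sub_add_cancel] at hD
    have hexp₁ : u + ((k + 1 : ℕ) : ℂ) = u + k + 1 := by push_cast; ring
    have hexp₂ : w - ((k + 1 : ℕ) : ℂ) = w - k - 1 := by push_cast; ring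
    rw [iteratedDeriv_succ, (Filter.eventuallyEq_of_mem (isOpen_Ioo.mem_nhds hs) ih).deriv_eq,
      hD.deriv, hexp₁, hexp₂, descPochhammer_succ_eval]
    ring

end IncompleteBeta

lemma descPochhammer_eval_add_nat_sub_one {z : ℂ} (hz : 0 < z.re) (n : ℕ) :
    (descPochhammer ℂ n).eval (z + n - 1) = Gamma (z + n) / Gamma z := by
  rw [descPochhammer_eval_eq_ascPochhammer, show z + n - 1 - n + 1 = z by ring,
    Gamma_add_nat_div_Gamma_eq]
  rintro k rfl
  simp only [neg_re, natCast_re, Left.neg_pos_iff] at hz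
  exact hz.not_ge k.cast_nonneg

theorem stmt4_general (b c : ℂ) (n : ℕ) (y : ℝ) (hy0 : 0 < y) (hy1 : y < 1)
    (hb : 0 < b.re) (hbc : b.re < c.re) :
    ipochL b c y n = ((-1 : ℂ)^n * Complex.Gamma c /
        (Complex.Gamma (c - b + n) * Complex.Gamma b)) * (y:ℂ)^(b + n) *
      iteratedDeriv n (fun s : ℝ => (s:ℂ)^(-b) * incBeta s b (c - b + n)) y := by
  have hcb : 0 < (c - b).re := by rw [sub_re]; linarith
  have hΓb := Gamma_ne_zero_of_re_pos hb
  have hΓcb := Gamma_ne_zero_of_re_pos hcb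
  have hΓcbn : Gamma (c - b + n) ≠ 0 :=
    Gamma_ne_zero_of_re_pos (by rw [add_re, natCast_re]; positivity)
  have hy : (y : ℂ) ^ (b + n) ≠ 0 := by simp [hy0.ne']
  have hsign : ((-1 : ℂ) ^ n) ^ 2 = 1 := by rw [← pow_mul, pow_mul', neg_one_sq, one_pow]
  rw [ipochL, betaIntegral_eq_Gamma_mul_div _ _ hb hcb, add_sub_cancel,
    iteratedDeriv_ofReal_cpow_neg_mul_incBeta hb _ n ⟨hy0, hy1⟩,
    descPochhammer_eval_add_nat_sub_one hcb, add_sub_cancel_right]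
  simp only [cpow_neg]
  field_simp
  rw [hsign, mul_one]

theorem stmt4 (b c : ℂ) (n : ℕ) (hn : 1 ≤ n) (y : ℝ) (hy0 : 0 < y) (hy1 : y < 1)
    (hb : 0 < b.re) (hbc : b.re < c.re) :
    ipochL b c y n = ((-1 : ℂ)^n * Complex.Gamma c /
        (Complex.Gamma (c - b + n) * Complex.Gamma b)) * (y:ℂ)^(b + n) *
      iteratedDeriv n (fun s : ℝ => (s:ℂ)^(-b) * incBeta s b (c - b + n)) y :=
  stmt4_general b c n y hy0 hy1 hb hbc
end

section
/- For Re(c) > Re(b) > 0, 0 ≤ y < 1 and |x| < 1, the n-th derivative formula holds: (d^n/dx^n) ₂F₁(a,[b,c;y];x) = ((a)_n (b)_n / (c)_n) · ₂F₁(a+n,[b+n,c+n;y];x). -/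
open Complex

/-! Since `t ^ k ≤ 1` on `[0, y]`, the ratios `[b,c;y]_k` are bounded in `k`, and
`‖(a)_k‖ ≤ k! · C(k + m, m)` for `m ≥ ‖a‖`; so the series has coefficients of polynomial growth
and may be differentiated termwise on the unit disc. Differentiating shifts the index, and
`(a)_{k+1} = a (a+1)_k` together with `B(b+1, c-b) = b/c · B(b, c-b)`, i.e.
`[b,c;y]_{k+1} = b/c · [b+1,c+1;y]_k`, turns the derivative into
`ab/c · ₂F₁(a+1,[b+1,c+1;y];x)`. Iterating gives the formula. -/

theorem poch_succ (a : ℂ) (k : ℕ) : poch a (k + 1) = a * poch (a + 1) k := by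
  rw [poch, Finset.prod_range_succ', poch, mul_comm]
  simp only [Nat.cast_add, Nat.cast_one, Nat.cast_zero, add_zero, add_assoc, add_comm (1 : ℂ)]

theorem norm_poch_le {a : ℂ} {m : ℕ} (ha : ‖a‖ ≤ m) (k : ℕ) :
    ‖poch a k‖ ≤ k.factorial * (k + m).choose m := by
  calc ‖poch a k‖ = ∏ i ∈ Finset.range k, ‖a + i‖ := norm_prod _ _
    _ ≤ ∏ i ∈ Finset.range k, ((m + 1 + i : ℕ) : ℝ) := by
      gcongr with i
      exact (norm_add_le _ _).trans (by push_cast; rw [Complex.norm_natCast]; linarith)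
    _ = k.factorial * (k + m).choose m := by
      rw [← Nat.cast_prod, ← Nat.ascFactorial_eq_prod_range,
        Nat.ascFactorial_eq_factorial_mul_choose, add_comm m k, ← Nat.choose_symm_add]
      push_cast; ring

namespace Complex

theorem betaIntegral_ne_zero {u v : ℂ} (hu : 0 < u.re) (hv : 0 < v.re) :
    betaIntegral u v ≠ 0 := by
  have h := Gamma_mul_Gamma_eq_betaIntegral hu hv
  intro hB
  rw [hB, mul_zero] at h
  exact mul_ne_zero (Gamma_ne_zero_of_re_pos hu) (Gamma_ne_zero_of_re_pos hv) h

theorem betaIntegral_add_one_left {u v : ℂ} (hu : 0 < u.re) (hv : 0 < v.re) :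
    betaIntegral (u + 1) v = u / (u + v) * betaIntegral u v := by
  have huv : 0 < (u + v).re := by rw [add_re]; linarith
  have hu1 : 0 < (u + 1).re := by rw [add_re, one_re]; linarith
  have h := Gamma_mul_Gamma_eq_betaIntegral hu hv
  have h1 := Gamma_mul_Gamma_eq_betaIntegral hu1 hv
  rw [add_right_comm, Gamma_add_one u (ne_zero_of_re_pos hu),
    Gamma_add_one (u + v) (ne_zero_of_re_pos huv)] at h1
  rw [div_mul_eq_mul_div, eq_div_iff (ne_zero_of_re_pos huv)]
  apply mul_left_cancel₀ (Gamma_ne_zero_of_re_pos huv)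
  linear_combination u * h - h1

end Complex

theorem ipochL_succ {b c : ℂ} (hb : 0 < b.re) (hbc : b.re < c.re) (y : ℝ) (k : ℕ) :
    ipochL b c y (k + 1) = b / c * ipochL (b + 1) (c + 1) y k := by
  have hcb : 0 < (c - b).re := by rw [Complex.sub_re]; linarith
  have hB := Complex.betaIntegral_add_one_left hb hcb
  rw [add_sub_cancel] at hB
  rw [ipochL, ipochL, add_sub_add_right_eq_sub, hB, Nat.cast_succ, ← add_assoc, add_right_comm b]
  field_simp [Complex.ne_zero_of_re_pos hb, Complex.ne_zero_of_re_pos (hb.trans hbc),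
    Complex.betaIntegral_ne_zero hb hcb]

open intervalIntegral in
theorem norm_incBeta_add_natCast_le_s11 {y : ℝ} (hy0 : 0 ≤ y) (hy1 : y ≤ 1) {u v : ℂ}
    (hu : 0 < u.re) (hv : 0 < v.re) (k : ℕ) :
    ‖incBeta y (u + k) v‖ ≤ ∫ t in (0:ℝ)..1, ‖(t:ℂ) ^ (u - 1) * (1 - (t:ℂ)) ^ (v - 1)‖ := by
  have hint := (Complex.betaIntegral_convergent hu hv).norm
  refine (norm_integral_le_of_norm_le hy0 (MeasureTheory.ae_of_all _ fun t ht => ?_)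
    (hint.mono_set ?_)).trans
    (integral_mono_interval le_rfl hy0 hy1 (MeasureTheory.ae_of_all _ fun t => norm_nonneg _) hint)
  · have ht0 : (t : ℂ) ≠ 0 := Complex.ofReal_ne_zero.mpr ht.1.ne'
    have htk : ‖(t : ℂ)‖ ^ k ≤ 1 := by
      rw [Complex.norm_real, Real.norm_of_nonneg ht.1.le]
      exact pow_le_one₀ ht.1.le (ht.2.trans hy1)
    rw [add_sub_right_comm, Complex.cpow_add _ _ ht0, Complex.cpow_natCast, norm_mul, norm_mul,
      norm_mul, norm_pow]
    gcongr
    exact mul_le_of_le_one_right (norm_nonneg _) htk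
  · rw [Set.uIcc_of_le hy0, Set.uIcc_of_le zero_le_one]
    exact Set.Icc_subset_Icc le_rfl hy1

theorem exists_norm_ipochL_le {b c : ℂ} (hb : 0 < b.re) (hbc : b.re < c.re) {y : ℝ}
    (hy0 : 0 ≤ y) (hy1 : y ≤ 1) : ∃ M, ∀ k, ‖ipochL b c y k‖ ≤ M := by
  have hcb : 0 < (c - b).re := by rw [Complex.sub_re]; linarith
  refine ⟨(∫ t in (0:ℝ)..1, ‖(t:ℂ) ^ (b - 1) * (1 - (t:ℂ)) ^ (c - b - 1)‖) /
    ‖Complex.betaIntegral b (c - b)‖, fun k => ?_⟩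
  rw [ipochL, norm_div]
  exact div_le_div_of_nonneg_right (norm_incBeta_add_natCast_le_s11 hy0 hy1 hb hcb k) (norm_nonneg _)

theorem summable_natCast_mul_choose_mul_pow_pred (m : ℕ) {r : ℝ} (hr0 : 0 ≤ r) (hr1 : r < 1) :
    Summable fun k : ℕ => (k * (k + m).choose m : ℝ) * r ^ (k - 1) := by
  rw [← summable_nat_add_iff 1]
  refine ((summable_choose_mul_geometric_of_norm_lt_one (m + 1)
    (by rwa [Real.norm_of_nonneg hr0])).mul_left (m + 1 : ℝ)).congr fun k => ?_
  have h : (m + 1) * (k + (m + 1)).choose (m + 1) = (k + 1) * (k + 1 + m).choose m := by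
    have := Nat.choose_succ_right_eq (k + 1 + m) m
    rw [show k + 1 + m - m = k + 1 by omega, show k + 1 + m = k + (m + 1) by omega] at this
    rw [show k + 1 + m = k + (m + 1) by omega]
    linarith
  rw [Nat.add_sub_cancel, ← mul_assoc]
  exact_mod_cast congrArg (fun n : ℕ => (n : ℝ) * r ^ k) h

open Metric in
theorem hasDerivAt_tsum_mul_pow {𝕜 : Type*} [RCLike 𝕜] {c : ℕ → 𝕜} {C : ℝ} {m : ℕ}
    (hc : ∀ k, ‖c k‖ ≤ C * (k + m).choose m) {z : 𝕜} (hz : ‖z‖ < 1) :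
    HasDerivAt (fun w => ∑' k, c k * w ^ k) (∑' k, c (k + 1) * (k + 1) * z ^ k) z := by
  obtain ⟨r, hzr, hr1⟩ := exists_between hz
  have hr0 : 0 ≤ r := (norm_nonneg z).trans hzr.le
  have hC : 0 ≤ C := by simpa using (norm_nonneg _).trans (hc 0)
  have hz' : z ∈ ball (0 : 𝕜) r := mem_ball_zero_iff.mpr hzr
  have hderiv (k : ℕ) (w : 𝕜) : HasDerivAt (fun w => c k * w ^ k) (c k * (k * w ^ (k - 1))) w :=
    (hasDerivAt_pow k w).const_mul (c k)
  have hbound (k : ℕ) (w : 𝕜) (hw : w ∈ ball (0 : 𝕜) r) :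
      ‖c k * (k * w ^ (k - 1))‖ ≤ C * ((k * (k + m).choose m : ℝ) * r ^ (k - 1)) := by
    rw [norm_mul, norm_mul, norm_pow, RCLike.norm_natCast]
    calc ‖c k‖ * (k * ‖w‖ ^ (k - 1)) ≤ C * (k + m).choose m * (k * r ^ (k - 1)) := by
          gcongr
          · exact hc k
          · exact (mem_ball_zero_iff.mp hw).le
      _ = _ := by ring
  have hsummable : Summable fun k => c k * z ^ k := by
    refine Summable.of_norm_bounded ((summable_choose_mul_geometric_of_norm_lt_one m
      (by rwa [Real.norm_of_nonneg hr0])).mul_left C) fun k => ?_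
    rw [norm_mul, norm_pow, ← mul_assoc]
    gcongr
    exact hc k
  have hu := (summable_natCast_mul_choose_mul_pow_pred m hr0 hr1).mul_left C
  have hshift : ∑' k, c k * (k * z ^ (k - 1)) = ∑' k, c (k + 1) * (k + 1) * z ^ k := by
    rw [(Summable.of_norm_bounded hu fun k => hbound k z hz').tsum_eq_zero_add]
    simp only [Nat.cast_zero, zero_mul, mul_zero, zero_add, Nat.add_sub_cancel, Nat.cast_succ,
      mul_assoc]
  exact hshift ▸ hasDerivAt_tsum_of_isPreconnected hu isOpen_ball
    (convex_ball (0 : 𝕜) r).isPreconnected (fun k w _ => hderiv k w) hbound hz' hsummable hz'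

theorem inc2F1L_eq_tsum (a b c : ℂ) (y : ℝ) (x : ℂ) :
    inc2F1L a b c y x = ∑' k, poch a k * ipochL b c y k / k.factorial * x ^ k :=
  tsum_congr fun k => by ring

theorem hasDerivAt_inc2F1L (a : ℂ) {b c : ℂ} (hb : 0 < b.re) (hbc : b.re < c.re) {y : ℝ}
    (hy0 : 0 ≤ y) (hy1 : y ≤ 1) {x : ℂ} (hx : ‖x‖ < 1) :
    HasDerivAt (inc2F1L a b c y) (a * b / c * inc2F1L (a + 1) (b + 1) (c + 1) y x) x := by
  obtain ⟨M, hM⟩ := exists_norm_ipochL_le hb hbc hy0 hy1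
  have hcoeff (k : ℕ) : ‖poch a k * ipochL b c y k / k.factorial‖ ≤
      M * (k + ⌈‖a‖⌉₊).choose ⌈‖a‖⌉₊ := by
    rw [norm_div, norm_mul, Complex.norm_natCast, div_le_iff₀ (by positivity)]
    calc ‖poch a k‖ * ‖ipochL b c y k‖
        ≤ (k.factorial * (k + ⌈‖a‖⌉₊).choose ⌈‖a‖⌉₊) * M :=
          mul_le_mul (norm_poch_le (Nat.le_ceil _) k) (hM k) (norm_nonneg _) (by positivity)
      _ = _ := by ring
  have hsucc (k : ℕ) : poch a (k + 1) * ipochL b c y (k + 1) / (k + 1).factorial * (k + 1) =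
      a * b / c * (poch (a + 1) k * ipochL (b + 1) (c + 1) y k / k.factorial) := by
    rw [poch_succ, ipochL_succ hb hbc, Nat.factorial_succ]
    push_cast
    field_simp
  rw [funext (inc2F1L_eq_tsum a b c y), inc2F1L_eq_tsum, ← tsum_mul_left]
  refine (hasDerivAt_tsum_mul_pow hcoeff hx).congr_deriv (tsum_congr fun k => ?_)
  rw [← mul_assoc, ← hsucc]

theorem stmt11 (a b c : ℂ) (y : ℝ) (x : ℂ) (n : ℕ)
    (hb : 0 < b.re) (hbc : b.re < c.re) (hy0 : 0 ≤ y) (hy1 : y < 1)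
    (hx : ‖x‖ < 1) :
    iteratedDeriv n (fun w : ℂ => inc2F1L a b c y w) x =
      (poch a n * poch b n / poch c n) * inc2F1L (a + n) (b + n) (c + n) y x := by
  induction n generalizing a b c with
  | zero => simp [poch]
  | succ n ih =>
    have hderiv : deriv (inc2F1L a b c y) =ᶠ[nhds x]
        fun w => a * b / c * inc2F1L (a + 1) (b + 1) (c + 1) y w :=
      Filter.eventually_of_mem (Metric.isOpen_ball.mem_nhds (mem_ball_zero_iff.mpr hx))
        fun w hw => (hasDerivAt_inc2F1L a hb hbc hy0 hy1.le (mem_ball_zero_iff.mp hw)).deriv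
    have hb' : 0 < (b + 1).re := by simp only [Complex.add_re, Complex.one_re]; linarith
    have hbc' : (b + 1).re < (c + 1).re := by simp only [Complex.add_re]; linarith
    rw [iteratedDeriv_succ', (hderiv.iteratedDeriv n).self_of_nhds, iteratedDeriv_const_mul_field,
      ih (a + 1) (b + 1) (c + 1) hb' hbc', poch_succ, poch_succ, poch_succ]
    simp only [Nat.cast_succ, ← add_assoc, add_right_comm _ (1 : ℂ)]
    ring
end

section
/- For Re(β) > Re(α) > 0 and 0 ≤ y < 1, the Kummer-type transformation holds: ₁F₁({α,β;1-y};z) = e^z · ₁F₁([β-α,β;y];-z). -/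
/-!
Both sides are Euler-type integrals over `[0, y]` against the beta weight
`t^(β-α-1) (1-t)^(α-1)`: splitting off `(1-t)^n`, resp. `t^n`, from the incomplete beta
integrals, the two series sum under the integral (dominated by `‖weight‖ · ‖z‖^n / n!`) to
`∫ weight · exp((1-t) z)` and `∫ weight · exp(-t z)`, divided by `B(α, β-α) = B(β-α, α)`.
The identity `exp z · exp(-t z) = exp((1-t) z)` then matches the integrands.
-/

open Complex

open MeasureTheory Set intervalIntegral
open scoped Nat

theorem hasSum_intervalIntegral_mul_pow_div_factorial {w v : ℝ → ℂ} {a b R : ℝ}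
    (hw : IntervalIntegrable w volume a b) (hv : Continuous v)
    (hR : ∀ t ∈ uIoc a b, ‖v t‖ ≤ R) :
    HasSum (fun n : ℕ => ∫ t in a..b, w t * (v t ^ n / n !))
      (∫ t in a..b, w t * exp (v t)) := by
  refine hasSum_integral_of_dominated_convergence (fun n t => ‖w t‖ * (R ^ n / n !))
    (fun n => hw.def'.aestronglyMeasurable.mul ((hv.pow n).div_const _).aestronglyMeasurable)
    (fun n => ae_of_all _ fun t ht => ?_)
    (ae_of_all _ fun t _ => (Real.summable_pow_div_factorial R).mul_left _) ?_
    (ae_of_all _ fun t _ => ?_)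
  · rw [norm_mul, norm_div, norm_pow, Complex.norm_natCast]
    gcongr
    exact hR t ht
  · simp_rw [tsum_mul_left]
    exact hw.norm.mul_const _
  · rw [exp_eq_exp_ℂ]
    exact (NormedSpace.expSeries_div_hasSum_exp (v t)).mul_left (w t)

theorem cpow_add_natCast_sub_one {x : ℂ} (hx : x ≠ 0) (p : ℂ) (n : ℕ) :
    x ^ (p + n - 1) = x ^ (p - 1) * x ^ n := by
  rw [← cpow_natCast, ← cpow_add _ _ hx, add_sub_right_comm]

theorem incBeta_add_natCast_left (y : ℝ) (p q : ℂ) (n : ℕ) :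
    incBeta y (p + n) q =
      ∫ t in (0:ℝ)..y, (t:ℂ) ^ (p - 1) * (1 - (t:ℂ)) ^ (q - 1) * (t:ℂ) ^ n := by
  refine integral_congr_ae ?_
  filter_upwards [measure_eq_zero_iff_ae_notMem.mp (measure_singleton (0:ℝ))] with t ht _
  rw [cpow_add_natCast_sub_one (ofReal_ne_zero.mpr ht)]
  ring

theorem incBeta_add_natCast_right (y : ℝ) (p q : ℂ) (n : ℕ) :
    incBeta y p (q + n) =
      ∫ t in (0:ℝ)..y, (t:ℂ) ^ (p - 1) * (1 - (t:ℂ)) ^ (q - 1) * (1 - (t:ℂ)) ^ n := by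
  refine integral_congr_ae ?_
  filter_upwards [measure_eq_zero_iff_ae_notMem.mp (measure_singleton (1:ℝ))] with t ht _
  have h1t : (1 - (t:ℂ)) ≠ 0 := by
    rw [sub_ne_zero, ne_comm]; exact_mod_cast ht
  rw [cpow_add_natCast_sub_one h1t]
  ring

theorem uIcc_zero_subset_Icc_zero_one {y : ℝ} (hy0 : 0 ≤ y) (hy1 : y ≤ 1) :
    uIcc 0 y ⊆ Icc 0 1 := by
  rw [uIcc_of_le hy0]
  exact Icc_subset_Icc le_rfl hy1

theorem intervalIntegrable_betaIntegrand {p q : ℂ} (hp : 0 < p.re) (hq : 0 < q.re) {y : ℝ}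
    (hy0 : 0 ≤ y) (hy1 : y ≤ 1) :
    IntervalIntegrable (fun t : ℝ => (t:ℂ) ^ (p - 1) * (1 - (t:ℂ)) ^ (q - 1)) volume 0 y :=
  (betaIntegral_convergent hp hq).mono_set <| by
    rw [uIcc_of_le zero_le_one]
    exact uIcc_zero_subset_Icc_zero_one hy0 hy1

theorem norm_ofReal_mul_le {t : ℝ} (ht : t ∈ Icc (0:ℝ) 1) (x : ℂ) : ‖(t:ℂ) * x‖ ≤ ‖x‖ := by
  rw [norm_mul, norm_real, Real.norm_of_nonneg ht.1]
  exact mul_le_of_le_one_left (norm_nonneg x) ht.2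

theorem norm_one_sub_ofReal_mul_le {t : ℝ} (ht : t ∈ Icc (0:ℝ) 1) (x : ℂ) :
    ‖(1 - (t:ℂ)) * x‖ ≤ ‖x‖ := by
  simpa using norm_ofReal_mul_le (t := 1 - t) ⟨by linarith [ht.2], by linarith [ht.1]⟩ x

theorem inc1F1L_eq_integral {b c : ℂ} (hb : 0 < b.re) (hcb : 0 < (c - b).re) {y : ℝ}
    (hy0 : 0 ≤ y) (hy1 : y ≤ 1) (x : ℂ) :
    inc1F1L b c y x = (∫ t in (0:ℝ)..y,
      (t:ℂ) ^ (b - 1) * (1 - (t:ℂ)) ^ (c - b - 1) * exp ((t:ℂ) * x)) / betaIntegral b (c - b) := by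
  have hsum := hasSum_intervalIntegral_mul_pow_div_factorial
    (intervalIntegrable_betaIntegrand hb hcb hy0 hy1) (v := fun t : ℝ => (t:ℂ) * x)
    (by fun_prop) fun t ht =>
      norm_ofReal_mul_le (uIcc_zero_subset_Icc_zero_one hy0 hy1 (uIoc_subset_uIcc ht)) x
  rw [inc1F1L, ← (hsum.div_const _).tsum_eq]
  refine tsum_congr fun n => ?_
  rw [ipochL, incBeta_add_natCast_left, mul_div_assoc, div_mul_eq_mul_div,
    ← intervalIntegral.integral_mul_const]
  congr 1
  refine integral_congr fun t _ => ?_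
  simp only [mul_pow]
  ring

theorem inc1F1U_eq_integral {b c : ℂ} (hb : 0 < b.re) (hcb : 0 < (c - b).re) {y : ℝ}
    (hy0 : 0 ≤ y) (hy1 : y ≤ 1) (x : ℂ) :
    inc1F1U b c y x = (∫ t in (0:ℝ)..1 - y,
      (t:ℂ) ^ (c - b - 1) * (1 - (t:ℂ)) ^ (b - 1) * exp ((1 - (t:ℂ)) * x)) /
        betaIntegral b (c - b) := by
  have h0 : (0:ℝ) ≤ 1 - y := by linarith
  have h1 : 1 - y ≤ 1 := by linarith
  have hsum := hasSum_intervalIntegral_mul_pow_div_factorial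
    (intervalIntegrable_betaIntegrand hcb hb h0 h1) (v := fun t : ℝ => (1 - (t:ℂ)) * x)
    (by fun_prop) fun t ht =>
      norm_one_sub_ofReal_mul_le (uIcc_zero_subset_Icc_zero_one h0 h1 (uIoc_subset_uIcc ht)) x
  rw [inc1F1U, ← (hsum.div_const _).tsum_eq]
  refine tsum_congr fun n => ?_
  rw [ipochU, incBeta_add_natCast_right, mul_div_assoc, div_mul_eq_mul_div,
    ← intervalIntegral.integral_mul_const]
  congr 1
  refine integral_congr fun t _ => ?_
  simp only [mul_pow]
  ring

theorem stmt14 (α β : ℂ) (y : ℝ) (z : ℂ)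
    (hα : 0 < α.re) (hαβ : α.re < β.re) (hy0 : 0 ≤ y) (hy1 : y < 1) :
    inc1F1U α β (1 - y) z = Complex.exp z * inc1F1L (β - α) β y (-z) := by
  have hβα : 0 < (β - α).re := by rw [sub_re]; linarith
  rw [inc1F1U_eq_integral hα hβα (by linarith) (by linarith),
    inc1F1L_eq_integral hβα (by rwa [sub_sub_cancel]) hy0 hy1.le]
  simp only [sub_sub_cancel]
  rw [betaIntegral_symm, mul_div_assoc', ← intervalIntegral.integral_const_mul]
  congr 1
  refine integral_congr fun t _ => ?_
  rw [mul_left_comm, ← exp_add]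
  congr 2
  ring
end

section
/- For Re(d) > Re(a) > 0, Re(b) > 0, Re(c) > 0, max{|x|,|z|} < 1 and 0 ≤ y < 1, the incomplete Appell F₁ function has the integral representation F₁[a,b,c;d;x,z;y] = (1/B(a,d-a)) ∫_0^y t^{a-1}(1-t)^{d-a-1}(1-xt)^{-b}(1-zt)^{-c} dt. -/
open Complex

/-!
The binomial series gives `(1 - x t)^(-b) (1 - z t)^(-c) = Σ (b)_m (c)_n (x t)^m (z t)^n / (m! n!)`,
and for `0 ≤ t ≤ y` its terms are dominated by those of the absolutely convergent series at
`‖x‖ y, ‖z‖ y < 1`. The weight `t^(a-1) (1-t)^(d-a-1)` is integrable on `(0, y]` because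
`Re a > 0` and `y < 1`, so the double series may be integrated termwise, and the `(m, n)` term
integrates to `B_y(a + m + n, d - a) (b)_m (c)_n x^m z^n / (m! n!)`.
-/

open MeasureTheory

theorem poch_eq_ascPochhammer_eval (b : ℂ) (n : ℕ) : poch b n = (ascPochhammer ℂ n).eval b := by
  induction n with
  | zero => simp [poch]
  | succ n ih => rw [ascPochhammer_succ_eval, ← ih, poch, Finset.prod_range_succ, poch]

theorem poch_div_factorial_eq_choose (b : ℂ) (n : ℕ) :
    poch b n / n.factorial = Ring.choose (b + n - 1) n := by
  rw [← Ring.multichoose_eq, div_eq_iff (Nat.cast_ne_zero.mpr n.factorial_ne_zero),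
    poch_eq_ascPochhammer_eval, ← Polynomial.ascPochhammer_smeval_eq_eval,
    ← Ring.factorial_nsmul_multichoose_eq_ascPochhammer, nsmul_eq_mul, mul_comm]

theorem hasFPowerSeriesOnBall_one_sub_cpow_neg (b : ℂ) :
    HasFPowerSeriesOnBall (fun w ↦ (1 - w) ^ (-b))
      (.ofScalars ℂ fun n ↦ poch b n / n.factorial) 0 1 := by
  simpa [poch_div_factorial_eq_choose, Complex.cpow_neg] using
    Complex.one_div_one_sub_cpow_hasFPowerSeriesOnBall_zero b

theorem hasSum_poch_div_factorial_mul_pow (b : ℂ) {w : ℂ} (hw : ‖w‖ < 1) :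
    HasSum (fun n ↦ poch b n / n.factorial * w ^ n) ((1 - w) ^ (-b)) := by
  have := (hasFPowerSeriesOnBall_one_sub_cpow_neg b).hasSum (y := w)
    (by simpa [← ofReal_norm] using ENNReal.ofReal_lt_one.mpr hw)
  simpa [FormalMultilinearSeries.ofScalars_apply_eq, mul_comm] using this

theorem summable_norm_poch_div_factorial_mul_pow (b : ℂ) {r : ℝ} (hr0 : 0 ≤ r) (hr : r < 1) :
    Summable (fun n ↦ ‖poch b n / n.factorial‖ * r ^ n) := by
  lift r to NNReal using hr0
  have h := FormalMultilinearSeries.summable_norm_mul_pow _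
    ((ENNReal.coe_lt_one_iff.mpr hr).trans_le (hasFPowerSeriesOnBall_one_sub_cpow_neg b).r_le)
  simpa [FormalMultilinearSeries.ofScalars_norm, norm_div] using h

theorem hasSum_prod_poch_div_factorial_mul_pow (b c : ℂ) {u v : ℂ} (hu : ‖u‖ < 1) (hv : ‖v‖ < 1) :
    HasSum (fun p : ℕ × ℕ ↦ poch b p.1 / p.1.factorial * u ^ p.1 *
      (poch c p.2 / p.2.factorial * v ^ p.2)) ((1 - u) ^ (-b) * (1 - v) ^ (-c)) := by
  have hnorm (b w : ℂ) (hw : ‖w‖ < 1) :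
      Summable (fun n ↦ ‖poch b n / n.factorial * w ^ n‖) := by
    simpa only [norm_mul, norm_pow] using
      summable_norm_poch_div_factorial_mul_pow b (norm_nonneg w) hw
  have hprod := summable_mul_of_summable_norm (hnorm b u hu) (hnorm c v hv)
  exact ((hasSum_poch_div_factorial_mul_pow b hu).mul
    (hasSum_poch_div_factorial_mul_pow c hv) hprod :)

theorem integral_mul_tsum_of_norm_le {α ι 𝕜 : Type*} [MeasurableSpace α] {μ : Measure α}
    [Countable ι] [RCLike 𝕜] {w : α → 𝕜} (hw : Integrable w μ) {f : ι → α → 𝕜}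
    (hf : ∀ i, AEStronglyMeasurable (f i) μ) {M : ι → ℝ} (hM : Summable M)
    (hfM : ∀ i, ∀ᵐ t ∂μ, ‖f i t‖ ≤ M i) :
    ∫ t, w t * ∑' i, f i t ∂μ = ∑' i, ∫ t, w t * f i t ∂μ := by
  have hbound (i : ι) : ∀ᵐ t ∂μ, ‖w t * f i t‖ ≤ ‖w t‖ * M i := by
    filter_upwards [hfM i] with t ht
    rw [norm_mul]
    exact mul_le_mul_of_nonneg_left ht (norm_nonneg _)
  have hint (i : ι) : Integrable (fun t ↦ w t * f i t) μ :=
    (hw.norm.mul_const (M i)).mono' (hw.aestronglyMeasurable.mul (hf i)) (hbound i)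
  have hsum : Summable fun i ↦ ∫ t, ‖w t * f i t‖ ∂μ := by
    refine (hM.mul_left (∫ t, ‖w t‖ ∂μ)).of_nonneg_of_le
      (fun i ↦ integral_nonneg fun t ↦ norm_nonneg _) fun i ↦ ?_
    rw [← integral_mul_const]
    exact integral_mono_ae (hint i).norm (hw.norm.mul_const (M i)) (hbound i)
  simp_rw [← tsum_mul_left]
  exact (integral_tsum_of_summable_integral_norm hint hsum).symm

theorem integrableOn_cpow_mul_one_sub_cpow {a : ℂ} (ha : 0 < a.re) (e : ℂ) {y : ℝ}
    (hy0 : 0 ≤ y) (hy1 : y < 1) :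
    IntegrableOn (fun t : ℝ ↦ (t : ℂ) ^ (a - 1) * (1 - (t : ℂ)) ^ e) (Set.Ioc 0 y) := by
  have hcont : ContinuousOn (fun t : ℝ ↦ (1 - (t : ℂ)) ^ e) (Set.uIcc 0 y) := by
    refine ContinuousOn.cpow_const (by fun_prop) fun t ht ↦ ?_
    rw [Set.uIcc_of_le hy0] at ht
    rw [← Complex.ofReal_one, ← Complex.ofReal_sub]
    exact Complex.ofReal_mem_slitPlane.mpr (by linarith [ht.2])
  have h := (intervalIntegral.intervalIntegrable_cpow' (a := 0) (b := y)
    (r := a - 1) (by rw [Complex.sub_re, Complex.one_re]; linarith)).mul_continuousOn hcont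
  exact (intervalIntegrable_iff_integrableOn_Ioc_of_le hy0).mp h

theorem incBeta_add_natCast {y : ℝ} (hy : 0 ≤ y) (a e : ℂ) (k : ℕ) :
    incBeta y (a + k) e =
      ∫ t in Set.Ioc 0 y, (t : ℂ) ^ (a - 1) * (1 - (t : ℂ)) ^ (e - 1) * (t : ℂ) ^ k := by
  rw [incBeta, intervalIntegral.integral_of_le hy]
  refine setIntegral_congr_fun measurableSet_Ioc fun t ht ↦ ?_
  have ht0 : (t : ℂ) ≠ 0 := Complex.ofReal_ne_zero.mpr ht.1.ne'
  rw [show a + k - 1 = a - 1 + k by ring, Complex.cpow_add _ _ ht0, Complex.cpow_natCast]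
  ring

theorem norm_poch_div_factorial_mul_pow_ofReal_le (b u : ℂ) (n : ℕ) {t y : ℝ} (ht0 : 0 ≤ t)
    (hty : t ≤ y) :
    ‖poch b n / n.factorial * (u * t) ^ n‖ ≤ ‖poch b n / n.factorial‖ * (‖u‖ * y) ^ n := by
  rw [norm_mul, norm_pow, norm_mul, Complex.norm_real, Real.norm_of_nonneg ht0]
  gcongr

theorem setIntegral_mul_one_sub_cpow_neg_mul_one_sub_cpow_neg {w : ℝ → ℂ} {y : ℝ} (hy : 0 ≤ y)
    (hw : IntegrableOn w (Set.Ioc 0 y)) (b c : ℂ) {x z : ℂ} (hxy : ‖x‖ * y < 1)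
    (hzy : ‖z‖ * y < 1) :
    ∫ t in Set.Ioc 0 y, w t * ((1 - x * t) ^ (-b) * (1 - z * t) ^ (-c)) =
      ∑' p : ℕ × ℕ, poch b p.1 / p.1.factorial * x ^ p.1 * (poch c p.2 / p.2.factorial * z ^ p.2) *
        ∫ t in Set.Ioc 0 y, w t * (t : ℂ) ^ (p.1 + p.2) := by
  have hterm (p : ℕ × ℕ) (t : ℝ) : w t * (poch b p.1 / p.1.factorial * (x * t) ^ p.1 *
      (poch c p.2 / p.2.factorial * (z * t) ^ p.2)) = poch b p.1 / p.1.factorial * x ^ p.1 *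
        (poch c p.2 / p.2.factorial * z ^ p.2) * (w t * (t : ℂ) ^ (p.1 + p.2)) := by
    ring
  simp_rw [← integral_const_mul, ← hterm]
  rw [← integral_mul_tsum_of_norm_le hw (fun p ↦ (by fun_prop : Continuous _).aestronglyMeasurable)
    ((summable_norm_poch_div_factorial_mul_pow b (by positivity) hxy).mul_of_nonneg
      (summable_norm_poch_div_factorial_mul_pow c (by positivity) hzy)
      (fun _ ↦ by positivity) (fun _ ↦ by positivity))]
  · refine setIntegral_congr_fun measurableSet_Ioc fun t ht ↦ ?_
    have hu {u : ℂ} (hu : ‖u‖ * y < 1) : ‖u * t‖ < 1 := by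
      rw [norm_mul, Complex.norm_real, Real.norm_of_nonneg ht.1.le]
      exact (mul_le_mul_of_nonneg_left ht.2 (norm_nonneg u)).trans_lt hu
    have h := (hasSum_prod_poch_div_factorial_mul_pow b c (hu hxy) (hu hzy)).tsum_eq
    rw [h]
  · refine fun p ↦ (ae_restrict_iff' measurableSet_Ioc).mpr (.of_forall fun t ht ↦ ?_)
    rw [norm_mul]
    exact mul_le_mul (norm_poch_div_factorial_mul_pow_ofReal_le b x p.1 ht.1.le ht.2)
      (norm_poch_div_factorial_mul_pow_ofReal_le c z p.2 ht.1.le ht.2) (norm_nonneg _)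
      (by positivity)

theorem stmt18_general (a b c d x z : ℂ) (y : ℝ)
    (ha : 0 < a.re)
    (hx : ‖x‖ < 1) (hz : ‖z‖ < 1)
    (hy0 : 0 ≤ y) (hy1 : y < 1) :
    incAppellF1 a b c d x z y = (1 / Complex.betaIntegral a (d - a)) *
      ∫ t in (0:ℝ)..y, (t:ℂ)^(a-1) * (1 - (t:ℂ))^(d-a-1) *
        (1 - x * t)^(-b) * (1 - z * t)^(-c) := by
  have hxy : ‖x‖ * y < 1 := by nlinarith [norm_nonneg x]
  have hzy : ‖z‖ * y < 1 := by nlinarith [norm_nonneg z]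
  simp_rw [intervalIntegral.integral_of_le hy0, mul_assoc _ ((1 - x * _) ^ (-b)),
    setIntegral_mul_one_sub_cpow_neg_mul_one_sub_cpow_neg hy0
      (integrableOn_cpow_mul_one_sub_cpow ha (d - a - 1) hy0 hy1) b c hxy hzy,
    incAppellF1, ← tsum_mul_left]
  refine tsum_congr fun p ↦ ?_
  rw [ipochL, incBeta_add_natCast hy0]
  ring

theorem stmt18 (a b c d x z : ℂ) (y : ℝ)
    (ha : 0 < a.re) (had : a.re < d.re) (hb : 0 < b.re) (hc : 0 < c.re)
    (hx : ‖x‖ < 1) (hz : ‖z‖ < 1)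
    (hy0 : 0 ≤ y) (hy1 : y < 1) :
    incAppellF1 a b c d x z y = (1 / Complex.betaIntegral a (d - a)) *
      ∫ t in (0:ℝ)..y, (t:ℂ)^(a-1) * (1 - (t:ℂ))^(d-a-1) *
        (1 - x * t)^(-b) * (1 - z * t)^(-c) :=
  stmt18_general a b c d x z y ha hx hz hy0 hy1
end
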